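/- The integral over the real line ∫_ℝ (−1 − 3ix + 5x² + 3ix³)/((x − i)⁶(x + i)⁴) dx equals 15π/64. -/

import Mathlib

/-! The partial fraction expansion of the integrand consists of terms `(z ∓ i)⁻ᵏ` with `k ≥ 2`,
which are derivatives of rational functions vanishing at `±∞`, together with the simple-pole
terms `-(15i/128) ((z - i)⁻¹ - (z + i)⁻¹) = (15/64) (1 + z²)⁻¹`, whose primitive is
`(15/64) arctan`. Hence the integral is `(15/64) (arctan (+∞) - arctan (-∞)) = 15π/64`, which is
`2πi` times the residue `-15i/128` at `i`. -/

open Complex Real Filter MeasureTheory Topology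

theorem HasDerivAt.inv_pow {𝕜 : Type*} [NontriviallyNormedField 𝕜] {f : 𝕜 → 𝕜} {f' z : 𝕜}
    (hf : HasDerivAt f f' z) (hz : f z ≠ 0) (n : ℕ) :
    HasDerivAt (fun w => (f w)⁻¹ ^ n) (-n * f' * (f z)⁻¹ ^ (n + 1)) z := by
  refine ((hf.inv hz).pow n).congr_deriv ?_
  rcases n with _ | n
  · simp
  · simp only [Pi.inv_apply, Nat.add_sub_cancel]
    ring

theorem tendsto_inv_ofReal_add_cobounded (c : ℂ) :
    Tendsto (fun x : ℝ => ((x : ℂ) + c)⁻¹) (Bornology.cobounded ℝ) (𝓝 0) :=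
  tendsto_inv₀_cobounded.comp <|
    (tendsto_add_const_cobounded c).comp (RCLike.tendsto_ofReal_cobounded_cobounded ℂ)

theorem ofReal_sub_I_ne_zero (x : ℝ) : (x : ℂ) - I ≠ 0 := fun h => by
  simpa using congrArg im h

theorem ofReal_add_I_ne_zero (x : ℝ) : (x : ℂ) + I ≠ 0 := fun h => by
  simpa using congrArg im h

theorem norm_ofReal_sub_I_sq (x : ℝ) : ‖(x : ℂ) - I‖ ^ 2 = 1 + x ^ 2 := by
  rw [Complex.sq_norm, normSq_apply]
  simp
  ring

theorem norm_ofReal_add_I_sq (x : ℝ) : ‖(x : ℂ) + I‖ ^ 2 = 1 + x ^ 2 := by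
  rw [Complex.sq_norm, normSq_apply]
  simp
  ring

namespace KKWIntegral

noncomputable def integrand (z : ℂ) : ℂ :=
  (-1 - 3 * I * z + 5 * z ^ 2 + 3 * I * z ^ 3) / ((z - I) ^ 6 * (z + I) ^ 4)

noncomputable def higherPoleTerms (z : ℂ) : ℂ :=
  -(I / 8) * (z - I)⁻¹ ^ 5 - 1 / 16 * (z - I)⁻¹ ^ 2
    + 3 / 16 * (z + I)⁻¹ ^ 4 - 7 * I / 32 * (z + I)⁻¹ ^ 3 - 11 / 64 * (z + I)⁻¹ ^ 2

theorem integrand_eq_partialFractions {z : ℂ} (h₁ : z - I ≠ 0) (h₂ : z + I ≠ 0) :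
    integrand z = higherPoleTerms z + 15 / 64 * (1 + z ^ 2)⁻¹ := by
  have h : 1 + z ^ 2 = (z - I) * (z + I) := by linear_combination I_sq
  rw [integrand, higherPoleTerms, h]
  field_simp
  grind [I_sq]

theorem norm_integrand_le (x : ℝ) : ‖integrand x‖ ≤ 3 * (1 + x ^ 2)⁻¹ := by
  have hnum : ‖-1 - 3 * I * x + 5 * (x : ℂ) ^ 2 + 3 * I * (x : ℂ) ^ 3‖ ≤ 3 * (1 + x ^ 2) ^ 2 := by
    have h : -1 - 3 * I * x + 5 * (x : ℂ) ^ 2 + 3 * I * (x : ℂ) ^ 3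
        = ((5 * x ^ 2 - 1 : ℝ) : ℂ) + ((3 * x ^ 3 - 3 * x : ℝ) : ℂ) * I := by
      push_cast
      ring
    refine (sq_le_sq₀ (norm_nonneg _) (by positivity)).mp ?_
    rw [h, Complex.sq_norm, normSq_add_mul_I]
    nlinarith [sq_nonneg x]
  have hden : ‖((x : ℂ) - I) ^ 6 * ((x : ℂ) + I) ^ 4‖ = (1 + x ^ 2) ^ 5 := by
    rw [norm_mul, norm_pow, norm_pow, show 6 = 2 * 3 by rfl, show 4 = 2 * 2 by rfl, pow_mul,
      pow_mul, norm_ofReal_sub_I_sq, norm_ofReal_add_I_sq]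
    ring
  have hone : 1 ≤ 1 + x ^ 2 := le_add_of_nonneg_right (sq_nonneg x)
  rw [integrand, norm_div, hden]
  calc _ ≤ 3 * (1 + x ^ 2) ^ 2 / (1 + x ^ 2) ^ 5 := by gcongr
    _ = 3 * ((1 + x ^ 2) ^ 3)⁻¹ := by field_simp
    _ ≤ 3 * (1 + x ^ 2)⁻¹ := by gcongr; exact le_self_pow₀ hone (by norm_num)

theorem integrable_integrand : Integrable (fun x : ℝ => integrand x) := by
  have hcont : Continuous (fun x : ℝ => integrand x) :=
    Continuous.div (by fun_prop) (by fun_prop) fun x =>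
      mul_ne_zero (pow_ne_zero _ (ofReal_sub_I_ne_zero x)) (pow_ne_zero _ (ofReal_add_I_ne_zero x))
  exact (integrable_inv_one_add_sq.const_mul 3).mono' hcont.aestronglyMeasurable
    (ae_of_all _ norm_integrand_le)

noncomputable def rationalPart (z : ℂ) : ℂ :=
  I / 32 * (z - I)⁻¹ ^ 4 + 1 / 16 * (z - I)⁻¹ - 1 / 16 * (z + I)⁻¹ ^ 3
    + 7 * I / 64 * (z + I)⁻¹ ^ 2 + 11 / 64 * (z + I)⁻¹

theorem hasDerivAt_rationalPart {z : ℂ} (h₁ : z - I ≠ 0) (h₂ : z + I ≠ 0) :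
    HasDerivAt rationalPart (higherPoleTerms z) z := by
  have hu : HasDerivAt (· - I) 1 z := (hasDerivAt_id z).sub_const I
  have hv : HasDerivAt (· + I) 1 z := (hasDerivAt_id z).add_const I
  refine (((((hu.inv_pow h₁ 4).const_mul (I / 32)).add ((hu.inv h₁).const_mul (1 / 16))).sub
    ((hv.inv_pow h₂ 3).const_mul (1 / 16))).add ((hv.inv_pow h₂ 2).const_mul (7 * I / 64))).add
    ((hv.inv h₂).const_mul (11 / 64)) |>.congr_deriv ?_
  simp only [higherPoleTerms, div_eq_mul_inv, ← inv_pow]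
  push_cast
  ring

theorem tendsto_rationalPart_cobounded :
    Tendsto (fun x : ℝ => rationalPart x) (Bornology.cobounded ℝ) (𝓝 0) := by
  have hu : Tendsto (fun x : ℝ => ((x : ℂ) - I)⁻¹) (Bornology.cobounded ℝ) (𝓝 0) := by
    simpa only [sub_eq_add_neg] using tendsto_inv_ofReal_add_cobounded (-I)
  have hv := tendsto_inv_ofReal_add_cobounded I
  convert (((((hu.pow 4).const_mul (I / 32)).add (hu.const_mul (1 / 16))).sub
    ((hv.pow 3).const_mul (1 / 16))).add ((hv.pow 2).const_mul (7 * I / 64))).add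
    (hv.const_mul (11 / 64)) using 2 <;> simp [rationalPart]

noncomputable def primitive (x : ℝ) : ℂ :=
  rationalPart x + 15 / 64 * (Real.arctan x : ℂ)

theorem hasDerivAt_primitive (x : ℝ) : HasDerivAt primitive (integrand x) x := by
  have h₁ := ofReal_sub_I_ne_zero x
  have h₂ := ofReal_add_I_ne_zero x
  refine (hasDerivAt_rationalPart h₁ h₂).comp_ofReal.add
    ((hasDerivAt_arctan x).ofReal_comp.const_mul (15 / 64)) |>.congr_deriv ?_
  rw [integrand_eq_partialFractions h₁ h₂]
  push_cast
  ring

theorem tendsto_primitive {l : Filter ℝ} {a : ℝ} (hl : l ≤ Bornology.cobounded ℝ)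
    (harctan : Tendsto Real.arctan l (𝓝 a)) : Tendsto primitive l (𝓝 (15 / 64 * a)) := by
  have h := (tendsto_rationalPart_cobounded.mono_left hl).add
    ((continuous_ofReal.tendsto a |>.comp harctan).const_mul (15 / 64 : ℂ))
  rwa [zero_add] at h

end KKWIntegral

open KKWIntegral in
theorem stmt_13 :
    ∫ x : ℝ, (-1 - 3 * I * (x : ℂ) + 5 * (x : ℂ) ^ 2 + 3 * I * (x : ℂ) ^ 3) / (((x : ℂ) - I) ^ 6 * ((x : ℂ) + I) ^ 4) = 15 * (Real.pi : ℂ) / 64 := by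
  change ∫ x : ℝ, integrand x = _
  rw [integral_of_hasDerivAt_of_tendsto hasDerivAt_primitive integrable_integrand
    (tendsto_primitive IsOrderBornology.atBot_le_cobounded
      (tendsto_arctan_atBot.mono_right nhdsWithin_le_nhds))
    (tendsto_primitive IsOrderBornology.atTop_le_cobounded
      (tendsto_arctan_atTop.mono_right nhdsWithin_le_nhds))]
  push_cast
  ring
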